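/- Suppose m = n and n ≥ 3. Assume the initial vector satisfies: 0 < x̄(0) − x_1(0) ≤ η; η < x_2(0) − x̄(0) < η + (x̄(0) − x_1(0))/(n−1); and |x_j(0) − x̄(0)| ≥ η + (x̄(0) − x_1(0))/(n−1) for every j ≥ 3. Write ρ = 1 − δ + δ/n and t* = ⌈ ln(1 − (n−1)(x_2(0) − x̄(0) − η)/(x̄(0) − x_1(0))) / ln ρ ⌉. Then: (i) for every 0 ≤ t ≤ t*, x_j(t) = x_j(0) for all j ≠ 1 and x̄(t) − x_1(t) = ρ^t (x̄(0) − x_1(0)) > 0; (ii) x_2(t) − x̄(t) > η for 0 ≤ t < t* and x_2(t*) − x̄(t*) ≤ η; and (iii) every node state x_i(t) converges to a finite limit as t → ∞. -/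

import Mathlib

open Filter MeasureTheory

/-- Average of a vector of `n` opinions. -/
noncomputable def cliqueAvg (n : ℕ) (x : Fin n → ℝ) : ℝ := (∑ j, x j) / (n : ℝ)

/-- Full-clique (`m = n`) bounded-confidence opinion dynamics with mixing parameter `δ`
and confidence level `η`, started from `x0`. -/
noncomputable def fcTraj (n : ℕ) (δ η : ℝ) (x0 : Fin n → ℝ) : ℕ → Fin n → ℝ
  | 0 => x0
  | t + 1 => fun i =>
      if |fcTraj n δ η x0 t i - cliqueAvg n (fcTraj n δ η x0 t)| ≤ η then
        (1 - δ) * fcTraj n δ η x0 t i + δ * cliqueAvg n (fcTraj n δ η x0 t)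
      else fcTraj n δ η x0 t i

/-!
Call a node active when it lies within `η` of the average. One step contracts every active
deviation by `1 - δ` and shifts the average by `δ / n` times the total active deviation `σ`, where
`|σ| ≤ n η`; hence active nodes stay active and the active set is eventually constant. From then on
`σ` is geometric with ratio `1 - δ + k δ / n` for `k` active nodes (and `σ = 0` when `k = n`), so
every active deviation is a combination of two geometric sequences and every state converges.

In the `𝓑₁₁` regime node 1 is the only active node as long as node 2 stays outside the bound: the
gap `x̄ - x₁` then shrinks by `ρ` per step while the average rises by
`(x̄(0) - x₁(0)) (1 - ρ ^ t) / (n - 1)`. So node 2 enters exactly when `ρ ^ t` falls to the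
argument of the logarithm in `t*`, and the other nodes, farther out by the margin
`(x̄(0) - x₁(0)) / (n - 1)`, are not reached before.
-/

open Finset

section OneStep

variable {n : ℕ} {δ η : ℝ}

noncomputable def fcStep (n : ℕ) (δ η : ℝ) (x : Fin n → ℝ) : Fin n → ℝ := fun i =>
  if |x i - cliqueAvg n x| ≤ η then (1 - δ) * x i + δ * cliqueAvg n x else x i

noncomputable def activeSet (η : ℝ) (x : Fin n → ℝ) : Finset (Fin n) :=
  {i | |x i - cliqueAvg n x| ≤ η}

noncomputable def activeDevSum (η : ℝ) (x : Fin n → ℝ) : ℝ :=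
  ∑ i ∈ activeSet η x, (x i - cliqueAvg n x)

theorem mem_activeSet {x : Fin n → ℝ} {i : Fin n} :
    i ∈ activeSet η x ↔ |x i - cliqueAvg n x| ≤ η := by
  simp [activeSet]

theorem sum_sub_cliqueAvg (x : Fin n → ℝ) : ∑ i, (x i - cliqueAvg n x) = 0 := by
  rcases n.eq_zero_or_pos with rfl | hn
  · simp
  · rw [sum_sub_distrib, sum_const, card_univ, Fintype.card_fin, nsmul_eq_mul, cliqueAvg,
      mul_div_cancel₀ _ (by positivity), sub_self]

theorem fcStep_of_mem {x : Fin n → ℝ} {i : Fin n} (hi : i ∈ activeSet η x) :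
    fcStep n δ η x i = (1 - δ) * x i + δ * cliqueAvg n x :=
  if_pos (mem_activeSet.1 hi)

theorem fcStep_of_notMem {x : Fin n → ℝ} {i : Fin n} (hi : i ∉ activeSet η x) :
    fcStep n δ η x i = x i :=
  if_neg (mt mem_activeSet.2 hi)

theorem cliqueAvg_fcStep (x : Fin n → ℝ) :
    cliqueAvg n (fcStep n δ η x) = cliqueAvg n x - δ / n * activeDevSum η x := by
  have hsum : ∑ i, fcStep n δ η x i = ∑ i, x i - δ * activeDevSum η x := by
    have hstep : ∀ i, fcStep n δ η x i =
        x i - δ * if i ∈ activeSet η x then x i - cliqueAvg n x else 0 := by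
      intro i
      split_ifs with hi
      · rw [fcStep_of_mem hi]; ring
      · rw [fcStep_of_notMem hi]; ring
    simp only [hstep, sum_sub_distrib, ← mul_sum, sum_ite_mem, univ_inter, activeDevSum]
  rw [cliqueAvg, cliqueAvg, hsum]
  ring

theorem dev_fcStep_of_mem {x : Fin n → ℝ} {i : Fin n} (hi : i ∈ activeSet η x) :
    fcStep n δ η x i - cliqueAvg n (fcStep n δ η x) =
      (1 - δ) * (x i - cliqueAvg n x) + δ / n * activeDevSum η x := by
  rw [fcStep_of_mem hi, cliqueAvg_fcStep]; ring

theorem abs_activeDevSum_le (hη : 0 ≤ η) (x : Fin n → ℝ) : |activeDevSum η x| ≤ n * η :=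
  calc |activeDevSum η x| ≤ ∑ i ∈ activeSet η x, |x i - cliqueAvg n x| := abs_sum_le_sum_abs _ _
    _ ≤ #(activeSet η x) * η := by
      simpa using sum_le_sum fun i hi => mem_activeSet.1 hi
    _ ≤ n * η := by
      gcongr
      simpa using card_le_univ (activeSet η x)

theorem activeSet_subset_fcStep (hδ0 : 0 ≤ δ) (hδ1 : δ ≤ 1) (hη : 0 ≤ η) (x : Fin n → ℝ) :
    activeSet η x ⊆ activeSet η (fcStep n δ η x) := by
  intro i hi
  rw [mem_activeSet, dev_fcStep_of_mem hi]
  have hshift : δ / n * |activeDevSum η x| ≤ δ * η :=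
    calc δ / n * |activeDevSum η x| ≤ δ / n * (n * η) := by
          gcongr; exact abs_activeDevSum_le hη x
      _ = δ * η * (n / n) := by ring
      _ ≤ δ * η := mul_le_of_le_one_right (mul_nonneg hδ0 hη) (div_self_le_one _)
  calc |(1 - δ) * (x i - cliqueAvg n x) + δ / n * activeDevSum η x|
      ≤ (1 - δ) * |x i - cliqueAvg n x| + δ / n * |activeDevSum η x| := by
        refine (abs_add_le _ _).trans_eq ?_
        rw [abs_mul, abs_mul, abs_of_nonneg (sub_nonneg.2 hδ1),
          abs_of_nonneg (div_nonneg hδ0 n.cast_nonneg)]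
    _ ≤ (1 - δ) * η + δ * η :=
        add_le_add (mul_le_mul_of_nonneg_left (mem_activeSet.1 hi) (sub_nonneg.2 hδ1)) hshift
    _ = η := by ring

theorem activeDevSum_fcStep {x : Fin n → ℝ}
    (h : activeSet η (fcStep n δ η x) = activeSet η x) :
    activeDevSum η (fcStep n δ η x) = (1 - δ + #(activeSet η x) * (δ / n)) * activeDevSum η x := by
  rw [activeDevSum, h, sum_congr rfl fun i hi => dev_fcStep_of_mem hi, sum_add_distrib,
    ← mul_sum, sum_const, nsmul_eq_mul, ← activeDevSum]
  ring

theorem activeDevSum_eq_zero_or_lt_one (hδ : 0 < δ) (x : Fin n → ℝ) :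
    activeDevSum η x = 0 ∨ 1 - δ + #(activeSet η x) * (δ / n) < 1 := by
  rcases (card_le_univ (activeSet η x)).eq_or_lt with hcard | hcard
  · left
    rw [activeDevSum, eq_univ_of_card _ hcard, sum_sub_cliqueAvg]
  · right
    rw [Fintype.card_fin] at hcard
    have hn : (0 : ℝ) < n := by exact_mod_cast hcard.pos
    have : (#(activeSet η x) : ℝ) < n := by exact_mod_cast hcard
    have : #(activeSet η x) * (δ / n) < δ := by
      rw [← mul_div_assoc, div_lt_iff₀ hn, mul_comm]; gcongr
    linarith

theorem gap_fcStep_of_activeSet_eq_singleton {x : Fin n → ℝ} {i : Fin n}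
    (h : activeSet η x = {i}) :
    cliqueAvg n (fcStep n δ η x) - fcStep n δ η x i = (1 - δ + δ / n) * (cliqueAvg n x - x i) := by
  rw [cliqueAvg_fcStep, fcStep_of_mem (by simp [h]), activeDevSum, h, sum_singleton]
  ring

end OneStep

section Trajectory

variable {n : ℕ} {δ η : ℝ}

@[simp]
theorem fcTraj_zero (x0 : Fin n → ℝ) : fcTraj n δ η x0 0 = x0 :=
  rfl

theorem fcTraj_succ (x0 : Fin n → ℝ) (t : ℕ) :
    fcTraj n δ η x0 (t + 1) = fcStep n δ η (fcTraj n δ η x0 t) :=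
  rfl

theorem fcTraj_add (x0 : Fin n → ℝ) (s t : ℕ) :
    fcTraj n δ η x0 (s + t) = fcTraj n δ η (fcTraj n δ η x0 s) t := by
  induction t with
  | zero => rfl
  | succ t ih => rw [← add_assoc, fcTraj_succ, ih, fcTraj_succ]

theorem exists_activeSet_fcTraj_eventually_eq (hδ0 : 0 ≤ δ) (hδ1 : δ ≤ 1) (hη : 0 ≤ η)
    (x0 : Fin n → ℝ) :
    ∃ T, ∀ t, T ≤ t → activeSet η (fcTraj n δ η x0 t) = activeSet η (fcTraj n δ η x0 T) := by
  obtain ⟨T, hT⟩ := WellFoundedGT.monotone_chain_condition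
    ⟨fun t => activeSet η (fcTraj n δ η x0 t),
      monotone_nat_of_le_succ fun t => activeSet_subset_fcStep hδ0 hδ1 hη _⟩
  exact ⟨T, fun t ht => (hT t ht).symm⟩

theorem tendsto_fcTraj_of_activeSet_eq (hδ0 : 0 < δ) (hδ1 : δ ≤ 1) {x0 : Fin n → ℝ}
    (hS : ∀ t, activeSet η (fcTraj n δ η x0 t) = activeSet η x0) (i : Fin n) :
    ∃ L, Tendsto (fun t => fcTraj n δ η x0 t i) atTop (nhds L) := by
  by_cases hi : i ∈ activeSet η x0
  swap
  · have hconst : ∀ t, fcTraj n δ η x0 t i = x0 i := by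
      intro t
      induction t with
      | zero => rfl
      | succ t ih => rw [fcTraj_succ, fcStep_of_notMem (hS t ▸ hi), ih]
    simp only [hconst]
    exact ⟨_, tendsto_const_nhds⟩
  set k := ((activeSet η x0).card : ℝ)
  set μ := 1 - δ + k * (δ / n)
  set σ₀ := activeDevSum η x0
  have hk : k ≠ 0 := by simpa [k] using ne_empty_of_mem hi
  have hσ : ∀ t, activeDevSum η (fcTraj n δ η x0 t) = μ ^ t * σ₀ := by
    intro t
    induction t with
    | zero => simp [σ₀]
    | succ t ih =>
      rw [fcTraj_succ, activeDevSum_fcStep ((hS (t + 1)).trans (hS t).symm), ih, hS t, pow_succ]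
      ring
  -- `σ / k` is geometric with ratio `μ`, and the deviation of `i` minus `σ / k` with ratio `1 - δ`
  have hdev : ∀ t, fcTraj n δ η x0 t i - cliqueAvg n (fcTraj n δ η x0 t) =
      (1 - δ) ^ t * (x0 i - cliqueAvg n x0 - σ₀ / k) + μ ^ t * (σ₀ / k) := by
    intro t
    induction t with
    | zero => simp
    | succ t ih =>
      rw [fcTraj_succ, dev_fcStep_of_mem (hS t ▸ hi), ih, hσ, pow_succ, pow_succ]
      field_simp
      ring
  have hstate : ∀ t, fcTraj n δ η x0 t i = x0 i - δ * ∑ s ∈ range t,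
      (fcTraj n δ η x0 s i - cliqueAvg n (fcTraj n δ η x0 s)) := by
    intro t
    induction t with
    | zero => simp
    | succ t ih =>
      rw [fcTraj_succ, fcStep_of_mem (hS t ▸ hi), sum_range_succ]
      linear_combination ih
  have hsum : Summable fun t => fcTraj n δ η x0 t i - cliqueAvg n (fcTraj n δ η x0 t) := by
    simp only [hdev]
    refine ((summable_geometric_of_lt_one (by linarith) (by linarith)).mul_right _).add ?_
    rcases activeDevSum_eq_zero_or_lt_one (η := η) hδ0 x0 with h0 | hμ
    · simp only [show σ₀ = 0 from h0, zero_div, mul_zero, summable_zero]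
    · have hμ0 : 0 ≤ μ := add_nonneg (sub_nonneg.2 hδ1)
        (mul_nonneg (Nat.cast_nonneg _) (div_nonneg hδ0.le n.cast_nonneg))
      exact (summable_geometric_of_lt_one hμ0 hμ).mul_right _
  exact ⟨_, ((hsum.hasSum.tendsto_sum_nat.const_mul δ).const_sub _).congr fun t => (hstate t).symm⟩

theorem tendsto_fcTraj (hδ0 : 0 < δ) (hδ1 : δ ≤ 1) (hη : 0 ≤ η) (x0 : Fin n → ℝ) (i : Fin n) :
    ∃ L, Tendsto (fun t => fcTraj n δ η x0 t i) atTop (nhds L) := by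
  obtain ⟨T, hT⟩ := exists_activeSet_fcTraj_eventually_eq hδ0.le hδ1 hη x0
  obtain ⟨L, hL⟩ := tendsto_fcTraj_of_activeSet_eq hδ0 hδ1 (x0 := fcTraj n δ η x0 T)
    (fun t => by rw [← fcTraj_add, hT _ (Nat.le_add_right T t)]) i
  refine ⟨L, (tendsto_add_atTop_iff_nat T).1 ?_⟩
  simpa only [add_comm _ T, fcTraj_add] using hL

end Trajectory

section SingleMover

variable {n : ℕ} {δ η : ℝ}

theorem one_sub_add_div_pos (hn : 0 < n) (hδ : δ ≤ 1) : 0 < 1 - δ + δ / n := by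
  have hn' : (1 : ℝ) ≤ n := by exact_mod_cast hn
  have : δ * (n - 1) < n := by nlinarith
  rw [show 1 - δ + δ / n = (n - δ * (n - 1)) / n by field_simp; ring]
  exact div_pos (by linarith) (by positivity)

theorem one_sub_add_div_le_one (hδ : 0 ≤ δ) : 1 - δ + δ / n ≤ 1 := by
  rcases n.eq_zero_or_pos with rfl | hn
  · simp [hδ]
  · linarith [div_le_self hδ (by exact_mod_cast hn : (1 : ℝ) ≤ n)]

theorem one_sub_add_div_lt_one (hn : 1 < n) (hδ : 0 < δ) : 1 - δ + δ / n < 1 := by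
  linarith [div_lt_self hδ (by exact_mod_cast hn : (1 : ℝ) < n)]

theorem cliqueAvg_sub_cliqueAvg_of_eq_off {x y : Fin n → ℝ} {i : Fin n}
    (hy : ∀ j ≠ i, y j = x j) :
    ((n : ℝ) - 1) * (cliqueAvg n y - cliqueAvg n x) =
      (cliqueAvg n x - x i) - (cliqueAvg n y - y i) := by
  have hn : (n : ℝ) ≠ 0 := Nat.cast_ne_zero.2 (Fin.pos i).ne'
  have hsum : ∑ j, y j - ∑ j, x j = y i - x i := by
    rw [← sum_sub_distrib, sum_eq_single i (fun j _ hj => by rw [hy j hj, sub_self]) (by simp)]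
  have hx : ∑ j, x j = n * cliqueAvg n x := by rw [cliqueAvg, mul_div_cancel₀ _ hn]
  have hy' : ∑ j, y j = n * cliqueAvg n y := by rw [cliqueAvg, mul_div_cancel₀ _ hn]
  linear_combination hsum - hy' + hx

/-- Initial conditions modelled on the paper's set `𝓑₁₁`, with `i₀` and `i₁` in the roles of
nodes 1 and 2. -/
structure SingleMoverInit (n : ℕ) (η : ℝ) (x : Fin n → ℝ) (i₀ i₁ : Fin n) : Prop where
  ne : i₁ ≠ i₀
  gap_pos : 0 < cliqueAvg n x - x i₀
  gap_le : cliqueAvg n x - x i₀ ≤ η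
  dev_lt : x i₁ - cliqueAvg n x < η + (cliqueAvg n x - x i₀) / ((n : ℝ) - 1)
  far : ∀ j, j ≠ i₀ → j ≠ i₁ → η + (cliqueAvg n x - x i₀) / ((n : ℝ) - 1) ≤ |x j - cliqueAvg n x|

/-- While only `i₀` moves, `x i₁ - x̄` falls to `η` exactly when `ρ ^ t` falls to this level. -/
noncomputable def crossingLevel (n : ℕ) (η : ℝ) (x : Fin n → ℝ) (i₀ i₁ : Fin n) : ℝ :=
  1 - ((n : ℝ) - 1) * (x i₁ - cliqueAvg n x - η) / (cliqueAvg n x - x i₀)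

namespace SingleMoverInit

variable {x0 : Fin n → ℝ} {i₀ i₁ : Fin n}

theorem sub_one_pos (h : SingleMoverInit n η x0 i₀ i₁) : (0 : ℝ) < n - 1 := by
  have : (i₁ : ℕ) ≠ i₀ := Fin.val_ne_of_ne h.ne
  have : 1 < n := by omega
  have : (1 : ℝ) < n := by exact_mod_cast this
  linarith

theorem crossingLevel_pos (h : SingleMoverInit n η x0 i₀ i₁) :
    0 < crossingLevel n η x0 i₀ i₁ := by
  have := h.dev_lt
  rw [crossingLevel, sub_pos, div_lt_one h.gap_pos, ← lt_div_iff₀' h.sub_one_pos]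
  linarith

theorem lt_dev_iff (h : SingleMoverInit n η x0 i₀ i₁) {y : Fin n → ℝ} (hy : ∀ j ≠ i₀, y j = x0 j)
    {s : ℝ} (hs : cliqueAvg n y - y i₀ = s * (cliqueAvg n x0 - x0 i₀)) :
    η < y i₁ - cliqueAvg n y ↔ crossingLevel n η x0 i₀ i₁ < s := by
  have hshift := cliqueAvg_sub_cliqueAvg_of_eq_off hy
  rw [hs] at hshift
  rw [hy i₁ h.ne, crossingLevel, sub_lt_comm, lt_div_iff₀ h.gap_pos]
  have := h.sub_one_pos
  constructor <;> intro <;> nlinarith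

theorem activeSet_eq_singleton (h : SingleMoverInit n η x0 i₀ i₁) {y : Fin n → ℝ}
    (hy : ∀ j ≠ i₀, y j = x0 j) (hpos : 0 < cliqueAvg n y - y i₀)
    (hle : cliqueAvg n y - y i₀ ≤ cliqueAvg n x0 - x0 i₀) (hi₁ : η < y i₁ - cliqueAvg n y) :
    activeSet η y = {i₀} := by
  have hshift := cliqueAvg_sub_cliqueAvg_of_eq_off hy
  ext j
  rw [mem_activeSet, mem_singleton]
  constructor
  · intro hj
    by_contra hj₀
    by_cases hj₁ : j = i₁
    · subst hj₁
      exact (hi₁.trans_le (le_abs_self _)).not_ge hj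
    · have hn1 := h.sub_one_pos
      have hD0 : 0 ≤ cliqueAvg n y - cliqueAvg n x0 := by nlinarith
      have hD : cliqueAvg n y - cliqueAvg n x0 < (cliqueAvg n x0 - x0 i₀) / ((n : ℝ) - 1) := by
        rw [lt_div_iff₀ hn1]; linarith
      have htri := abs_sub_le (x0 j) (cliqueAvg n y) (cliqueAvg n x0)
      rw [abs_of_nonneg hD0] at htri
      rw [hy j hj₀] at hj
      linarith [h.far j hj₀ hj₁]
  · rintro rfl
    rw [abs_sub_comm, abs_of_pos hpos]
    exact hle.trans h.gap_le

theorem fcTraj_eq_off_and_gap_eq (h : SingleMoverInit n η x0 i₀ i₁) (hδ0 : 0 ≤ δ) (hδ1 : δ ≤ 1)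
    {t : ℕ} (ht : ∀ s < t, crossingLevel n η x0 i₀ i₁ < (1 - δ + δ / n) ^ s) :
    (∀ j ≠ i₀, fcTraj n δ η x0 t j = x0 j) ∧
      cliqueAvg n (fcTraj n δ η x0 t) - fcTraj n δ η x0 t i₀ =
        (1 - δ + δ / n) ^ t * (cliqueAvg n x0 - x0 i₀) := by
  have hρ0 := one_sub_add_div_pos (Fin.pos i₀) hδ1
  have hρ1 := one_sub_add_div_le_one (n := n) hδ0
  induction t with
  | zero => simp
  | succ t ih =>
    obtain ⟨hfix, hgap⟩ := ih fun s hs => ht s (by omega)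
    have hact : activeSet η (fcTraj n δ η x0 t) = {i₀} :=
      h.activeSet_eq_singleton hfix (by rw [hgap]; exact mul_pos (pow_pos hρ0 t) h.gap_pos)
        (by rw [hgap]; exact mul_le_of_le_one_left h.gap_pos.le (pow_le_one₀ hρ0.le hρ1))
        ((h.lt_dev_iff hfix hgap).2 (ht t (lt_add_one t)))
    refine ⟨fun j hj => ?_, ?_⟩
    · rw [fcTraj_succ, fcStep_of_notMem (by simp [hact, hj]), hfix j hj]
    · rw [fcTraj_succ, gap_fcStep_of_activeSet_eq_singleton hact, hgap, pow_succ]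
      ring

end SingleMoverInit

end SingleMover

theorem natCast_lt_ceil_log_div_log_iff {ρ c : ℝ} (hρ0 : 0 < ρ) (hρ1 : ρ < 1) (hc : 0 < c)
    (t : ℕ) : (t : ℤ) < ⌈Real.log c / Real.log ρ⌉ ↔ c < ρ ^ t := by
  rw [Int.lt_ceil, Int.cast_natCast, lt_div_iff_of_neg (Real.log_neg hρ0 hρ1), ← Real.log_pow,
    Real.log_lt_log_iff hc (pow_pos hρ0 t)]

/-- for `m = n`, `n ≥ 3`, under the initial conditions of the set
`\mathcal{B}_{11}`: with `ρ = 1 − δ + δ/n` and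
`t* = ⌈ln(1 − (n−1)(x_2(0) − x̄(0) − η)/(x̄(0) − x_1(0))) / ln ρ⌉`,
(i) for `0 ≤ t ≤ t*` all nodes other than node 1 keep their initial values and
`x̄(t) − x_1(t) = ρ^t (x̄(0) − x_1(0)) > 0`;
(ii) `x_2(t) − x̄(t) > η` for `0 ≤ t < t*` and `x_2(t*) − x̄(t*) ≤ η`;
(iii) every node state converges to a finite limit. -/
theorem stmt17 (n : ℕ) (hn : 3 ≤ n) (δ η : ℝ) (hδ0 : 0 < δ) (hδ1 : δ < 1) (hη0 : 0 < η)
    (x0 : Fin n → ℝ)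
    (h1a : 0 < cliqueAvg n x0 - x0 ⟨0, by omega⟩)
    (h1b : cliqueAvg n x0 - x0 ⟨0, by omega⟩ ≤ η)
    (h2b : x0 ⟨1, by omega⟩ - cliqueAvg n x0 <
      η + (cliqueAvg n x0 - x0 ⟨0, by omega⟩) / ((n : ℝ) - 1))
    (h3 : ∀ j : Fin n, 2 ≤ (j : ℕ) →
      η + (cliqueAvg n x0 - x0 ⟨0, by omega⟩) / ((n : ℝ) - 1) ≤ |x0 j - cliqueAvg n x0|)
    (ρ : ℝ) (hρ : ρ = 1 - δ + δ / (n : ℝ))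
    (tstar : ℤ)
    (htstar : tstar = ⌈Real.log (1 - ((n : ℝ) - 1) *
        (x0 ⟨1, by omega⟩ - cliqueAvg n x0 - η) / (cliqueAvg n x0 - x0 ⟨0, by omega⟩)) /
        Real.log ρ⌉) :
    (∀ t : ℕ, (t : ℤ) ≤ tstar →
      (∀ j : Fin n, j ≠ ⟨0, by omega⟩ → fcTraj n δ η x0 t j = x0 j) ∧
      cliqueAvg n (fcTraj n δ η x0 t) - fcTraj n δ η x0 t ⟨0, by omega⟩ =
        ρ ^ t * (cliqueAvg n x0 - x0 ⟨0, by omega⟩) ∧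
      0 < cliqueAvg n (fcTraj n δ η x0 t) - fcTraj n δ η x0 t ⟨0, by omega⟩) ∧
    (∀ t : ℕ, (t : ℤ) < tstar →
      η < fcTraj n δ η x0 t ⟨1, by omega⟩ - cliqueAvg n (fcTraj n δ η x0 t)) ∧
    (∀ t : ℕ, (t : ℤ) = tstar →
      fcTraj n δ η x0 t ⟨1, by omega⟩ - cliqueAvg n (fcTraj n δ η x0 t) ≤ η) ∧
    (∀ i : Fin n, ∃ L : ℝ, Tendsto (fun t => fcTraj n δ η x0 t i) atTop (nhds L)) := by
  subst hρ
  have hρ0 : 0 < 1 - δ + δ / n := one_sub_add_div_pos (by omega) hδ1.le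
  have hinit : SingleMoverInit n η x0 ⟨0, by omega⟩ ⟨1, by omega⟩ :=
    ⟨by simp, h1a, h1b, h2b, fun j hj₀ hj₁ => h3 j (by
      simp only [Ne, Fin.ext_iff] at hj₀ hj₁; omega)⟩
  have hlt (t : ℕ) :
      (t : ℤ) < tstar ↔ crossingLevel n η x0 ⟨0, by omega⟩ ⟨1, by omega⟩ < (1 - δ + δ / n) ^ t :=
    htstar ▸ natCast_lt_ceil_log_div_log_iff hρ0 (one_sub_add_div_lt_one (by omega) hδ0)
      hinit.crossingLevel_pos t
  have hphase (t : ℕ) (ht : (t : ℤ) ≤ tstar) :=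
    hinit.fcTraj_eq_off_and_gap_eq (δ := δ) hδ0.le hδ1.le (t := t) fun s hs => (hlt s).1 (by omega)
  refine ⟨fun t ht => ?_, fun t ht => ?_, fun t ht => ?_,
    tendsto_fcTraj hδ0 hδ1.le hη0.le x0⟩
  · obtain ⟨hfix, hgap⟩ := hphase t ht
    exact ⟨hfix, hgap, hgap ▸ mul_pos (pow_pos hρ0 t) h1a⟩
  · obtain ⟨hfix, hgap⟩ := hphase t ht.le
    exact (hinit.lt_dev_iff hfix hgap).2 ((hlt t).1 ht)
  · obtain ⟨hfix, hgap⟩ := hphase t ht.le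
    exact not_lt.1 fun h => ht.not_lt ((hlt t).2 ((hinit.lt_dev_iff hfix hgap).1 h))
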